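/- arXiv:1912.12850 — 6 statements merged into one kernel-verified Lean document; each statement's English description precedes it below -/
import Mathlib

section
/- Let n, d, s, r be positive integers with d^s dividing n and (r, d^s)_s = 1. Then the number of elements of the set A = {r + t·d^s : t = 1, 2, ..., n/d^s} satisfying (r + t·d^s, n)_s = 1 equals Φ_s(n) / Φ_s(d^s) (in particular Φ_s(d^s) divides Φ_s(n) under these hypotheses). -/
/-- The generalized gcd of a nonnegative integer `n` at level `s`: the largest
`s`-th power `l ^ s` (with `l ≥ 1`) dividing `n`.  Applying it to `n = gcd(a, b)`
gives the generalized gcd `(a, b)_s` of the paper. -/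
def sPowGcd (s n : ℕ) : ℕ := (Nat.findGreatest (fun l => l ^ s ∣ n) n) ^ s

/-- Klee's function `Φ_s(n)`: the number of `1 ≤ m ≤ n` with `(m, n)_s = 1`. -/
def klee (s n : ℕ) : ℕ :=
  ((Finset.Icc 1 n).filter (fun m => sPowGcd s (Nat.gcd m n) = 1)).card

/-!
Write `D = d ^ s` and `n = D * Q`. Since `(m, n)_s` only depends on `m mod n`, all counts are
counts over one period, and splitting `0 ≤ m < n` into the progressions `a + t * D`, `t < Q`,
gives `Φ_s(n) = ∑_{a < D} F(a)` with `F(a)` the number of `t < Q` such that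
`(a + t * D, n)_s = 1`.
If `(a, D)_s ≠ 1` then `F(a) = 0`. If `(a, D)_s = 1` then `F(a) = F(r)`: translating by a `k`
with `a + k ≡ r (mod D)` and `p ^ s ∣ k` for every prime `p ∤ d` with `p ^ s ∣ n` (Chinese
remainder theorem) maps the progression of `a` onto that of `r` and preserves `(·, n)_s = 1`.
Hence `Φ_s(n) = Φ_s(D) · F(r)`.
-/

open Finset Function

namespace Nat

theorem periodic_add_mul_of_periodic {p : ℕ → Prop} {D Q : ℕ} (hp : Periodic p (D * Q))
    (c : ℕ) :
    Periodic (fun t => p (c + t * D)) Q := fun t => by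
  simp only [Nat.add_mul, ← Nat.add_assoc, Nat.mul_comm Q]
  exact hp _

section PeriodicCount

variable {p : ℕ → Prop} [DecidablePred p]

theorem card_filter_Icc_one_eq_count_of_periodic {n : ℕ} (hp : Periodic p n) :
    #{m ∈ Icc 1 n | p m} = n.count p := by
  rw [← Ico_add_one_right_eq_Icc, Nat.add_comm n 1, filter_Ico_card_eq_of_periodic _ _ _ hp]

theorem count_comp_add_of_periodic {Q : ℕ} (hp : Periodic p Q) (c : ℕ) :
    Q.count (fun t => p (c + t)) = Q.count p := by
  have hc := count_add (p := p) c Q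
  have hQ := count_add (p := p) Q c
  have hshift : (fun k => p (Q + k)) = p := funext fun k => by rw [Nat.add_comm, hp]
  rw [Nat.add_comm Q c] at hQ
  simp only [hshift] at hQ
  omega

theorem count_mul_eq_sum_count (p : ℕ → Prop) [DecidablePred p] (D Q : ℕ) :
    (D * Q).count p = ∑ a ∈ range D, Q.count (fun t => p (a + t * D)) := by
  induction Q with
  | zero => simp
  | succ Q ih =>
    rw [Nat.mul_succ, count_add, ih, count_eq_card_filter_range, card_filter, ← sum_add_distrib]
    refine sum_congr rfl fun a _ => ?_
    rw [count_succ, Nat.add_comm (D * Q), Nat.mul_comm D]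

theorem count_add_mul_eq_of_modEq {D Q : ℕ} (hp : Periodic p (D * Q)) {a b : ℕ}
    (hab : a ≡ b [MOD D]) :
    Q.count (fun t => p (a + t * D)) = Q.count (fun t => p (b + t * D)) := by
  have hmod : ∀ c, Q.count (fun t => p (c + t * D)) = Q.count (fun t => p (c % D + t * D)) :=
    fun c => by
      rw [← count_comp_add_of_periodic (periodic_add_mul_of_periodic hp (c % D)) (c / D)]
      simp only [Nat.add_mul, ← Nat.add_assoc, Nat.mod_add_div']
  rw [hmod a, hmod b, show a % D = b % D from hab]

end PeriodicCount

theorem exists_coprime_forall_pow_dvd {s n : ℕ} (hs : s ≠ 0) (hn : n ≠ 0) (d : ℕ) :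
    ∃ N, Coprime d N ∧ ∀ p, p.Prime → p ^ s ∣ n → ¬ p ∣ d → p ^ s ∣ N := by
  refine ⟨∏ p ∈ n.primeFactors with ¬ p ∣ d, p ^ s, ?_, fun p hp hpn hpd => ?_⟩
  · refine Coprime.prod_right fun p hp => Coprime.pow_right _ ?_
    obtain ⟨hpn, hpd⟩ := mem_filter.1 hp
    exact ((prime_of_mem_primeFactors hpn).coprime_iff_not_dvd.2 hpd).symm
  · refine dvd_prod_of_mem (fun p => p ^ s) (mem_filter.2 ⟨?_, hpd⟩)
    exact mem_primeFactors.2 ⟨hp, (dvd_pow_self p hs).trans hpn, hn⟩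

end Nat

open Nat

theorem sPowGcd_eq_one_iff {s g : ℕ} (hs : s ≠ 0) (hg : g ≠ 0) :
    sPowGcd s g = 1 ↔ ∀ p : ℕ, p.Prime → ¬ p ^ s ∣ g := by
  rw [sPowGcd, Nat.pow_eq_one, or_iff_left hs, findGreatest_eq_iff]
  constructor
  · rintro ⟨-, -, hgreatest⟩ p hp hpg
    exact hgreatest hp.one_lt ((le_self_pow hs p).trans (le_of_dvd (pos_of_ne_zero hg) hpg)) hpg
  · refine fun h => ⟨one_le_iff_ne_zero.2 hg, fun _ => by simp, fun l hl _ hlg => ?_⟩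
    obtain ⟨p, hp, hpl⟩ := exists_prime_and_dvd hl.ne'
    exact h p hp ((pow_dvd_pow_of_dvd hpl s).trans hlg)

theorem sPowGcd_gcd_eq_one_iff {s m n : ℕ} (hs : s ≠ 0) (hn : n ≠ 0) :
    sPowGcd s (m.gcd n) = 1 ↔ ∀ p : ℕ, p.Prime → p ^ s ∣ n → ¬ p ^ s ∣ m := by
  simp only [sPowGcd_eq_one_iff hs (gcd_ne_zero_right hn), Nat.dvd_gcd_iff, not_and']

theorem periodic_sPowGcd_gcd (s n : ℕ) : Periodic (fun m => sPowGcd s (m.gcd n) = 1) n :=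
  fun m => by simp only [gcd_add_self_left]

theorem sPowGcd_gcd_eq_one_of_modEq {s n D x a : ℕ} (hs : s ≠ 0) (hn : n ≠ 0) (hDn : D ∣ n)
    (hxa : x ≡ a [MOD D]) (hx : sPowGcd s (x.gcd n) = 1) : sPowGcd s (a.gcd D) = 1 := by
  rw [sPowGcd_gcd_eq_one_iff hs hn] at hx
  rw [sPowGcd_gcd_eq_one_iff hs (ne_zero_of_dvd_ne_zero hn hDn)]
  exact fun p hp hpD hpa => hx p hp (hpD.trans hDn) ((hxa.dvd_iff hpD).2 hpa)

theorem exists_add_modEq_forall_sPowGcd_gcd_add_iff {s n d a b : ℕ} (hs : s ≠ 0) (hn : n ≠ 0)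
    (hdn : d ^ s ∣ n) (ha : sPowGcd s (a.gcd (d ^ s)) = 1) (hb : sPowGcd s (b.gcd (d ^ s)) = 1) :
    ∃ k, a + k ≡ b [MOD d ^ s] ∧ ∀ x, x ≡ a [MOD d ^ s] →
      (sPowGcd s ((x + k).gcd n) = 1 ↔ sPowGcd s (x.gcd n) = 1) := by
  have hD : d ^ s ≠ 0 := ne_zero_of_dvd_ne_zero hn hdn
  obtain ⟨N, hdN, hN⟩ := exists_coprime_forall_pow_dvd hs hn d
  obtain ⟨c, hc⟩ : ∃ c, a + c ≡ b [MOD d ^ s] := by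
    refine ⟨d ^ s - a % d ^ s + b, ?_⟩
    have hdiv := mod_add_div a (d ^ s)
    have hlt := mod_lt a (pos_of_ne_zero hD)
    rw [ModEq, show a + (d ^ s - a % d ^ s + b) = b + d ^ s * (a / d ^ s + 1) by
      rw [Nat.mul_add]; omega, add_mul_mod_self_left]
  obtain ⟨k, hkc, hkN⟩ := chineseRemainder (hdN.pow_left s) c 0
  have hak : a + k ≡ b [MOD d ^ s] := (hkc.add_left a).trans hc
  refine ⟨k, hak, fun x hxa => ?_⟩
  rw [sPowGcd_gcd_eq_one_iff hs hD] at ha hb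
  simp only [sPowGcd_gcd_eq_one_iff hs hn]
  refine forall₂_congr fun p hp => imp_congr_right fun hpn => not_congr ?_
  by_cases hpd : p ∣ d
  · have hpD : p ^ s ∣ d ^ s := pow_dvd_pow_of_dvd hpd s
    rw [((hxa.add_right k).trans hak).dvd_iff hpD, hxa.dvd_iff hpD]
    exact iff_of_false (hb p hp hpD) (ha p hp hpD)
  · exact Nat.dvd_add_left ((hN p hp hpn hpd).trans (modEq_zero_iff_dvd.1 hkN))

theorem count_sPowGcd_gcd_add_mul_eq_ite {s d Q r : ℕ} (hs : s ≠ 0) (hn : d ^ s * Q ≠ 0)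
    (hr : sPowGcd s (r.gcd (d ^ s)) = 1) (a : ℕ) :
    Q.count (fun t => sPowGcd s ((a + t * d ^ s).gcd (d ^ s * Q)) = 1) =
      if sPowGcd s (a.gcd (d ^ s)) = 1 then
        Q.count (fun t => sPowGcd s ((r + t * d ^ s).gcd (d ^ s * Q)) = 1)
      else 0 := by
  have hmodEq : ∀ t, a + t * d ^ s ≡ a [MOD d ^ s] := fun t => add_mul_mod_self_right a t _
  split_ifs with ha
  · obtain ⟨k, hak, hk⟩ :=
      exists_add_modEq_forall_sPowGcd_gcd_add_iff hs hn (Nat.dvd_mul_right _ Q) ha hr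
    rw [← count_add_mul_eq_of_modEq (periodic_sPowGcd_gcd s _) hak]
    congr 1
    funext t
    rw [Nat.add_right_comm, hk _ (hmodEq t)]
  · exact count_of_forall_not fun t _ ht =>
      ha (sPowGcd_gcd_eq_one_of_modEq hs hn (Nat.dvd_mul_right _ Q) (hmodEq t) ht)

theorem klee_eq_count (s n : ℕ) : klee s n = n.count (fun m => sPowGcd s (m.gcd n) = 1) :=
  card_filter_Icc_one_eq_count_of_periodic (periodic_sPowGcd_gcd s n)

theorem klee_pos (s : ℕ) {n : ℕ} (hn : n ≠ 0) : 0 < klee s n :=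
  card_pos.2 ⟨1, mem_filter.2 ⟨mem_Icc.2 ⟨le_rfl, one_le_iff_ne_zero.2 hn⟩, by simp [sPowGcd]⟩⟩

theorem klee_pow_mul {s d Q r : ℕ} (hs : s ≠ 0) (hn : d ^ s * Q ≠ 0)
    (hr : sPowGcd s (r.gcd (d ^ s)) = 1) :
    klee s (d ^ s * Q) =
      klee s (d ^ s) * Q.count (fun t => sPowGcd s ((r + t * d ^ s).gcd (d ^ s * Q)) = 1) := by
  rw [klee_eq_count, count_mul_eq_sum_count,
    sum_congr rfl fun a _ => count_sPowGcd_gcd_add_mul_eq_ite hs hn hr a, sum_ite,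
    sum_const_zero, add_zero, sum_const, smul_eq_mul, ← count_eq_card_filter_range, klee_eq_count]

theorem stmt_0_general (n d s r : ℕ) (hn : 0 < n) (hs : 0 < s)
    (hdvd : d ^ s ∣ n) (hrd : sPowGcd s (Nat.gcd r (d ^ s)) = 1) :
    klee s (d ^ s) ∣ klee s n ∧
    ((Finset.Icc 1 (n / d ^ s)).filter
        (fun t => sPowGcd s (Nat.gcd (r + t * d ^ s) n) = 1)).card
      = klee s n / klee s (d ^ s) := by
  obtain ⟨Q, rfl⟩ := hdvd
  have hD : 0 < d ^ s := pos_of_ne_zero (left_ne_zero_of_mul hn.ne')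
  rw [Nat.mul_div_cancel_left Q hD, klee_pow_mul hs.ne' hn.ne' hrd,
    Nat.mul_div_cancel_left _ (klee_pos s hD.ne'), card_filter_Icc_one_eq_count_of_periodic
      (periodic_add_mul_of_periodic (periodic_sPowGcd_gcd s _) r)]
  exact ⟨Nat.dvd_mul_right _ _, rfl⟩

theorem stmt_0 (n d s r : ℕ) (hn : 0 < n) (hd : 0 < d) (hs : 0 < s) (hr : 0 < r)
    (hdvd : d ^ s ∣ n) (hrd : sPowGcd s (Nat.gcd r (d ^ s)) = 1) :
    klee s (d ^ s) ∣ klee s n ∧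
    ((Finset.Icc 1 (n / d ^ s)).filter
        (fun t => sPowGcd s (Nat.gcd (r + t * d ^ s) n) = 1)).card
      = klee s n / klee s (d ^ s) :=
  stmt_0_general n d s r hn hs hdvd hrd
end

section
/- Let k, r be positive integers and let n be a positive integer with prime factorization n = p_1^{t_1} p_2^{t_2} ··· p_q^{t_q}. Then Σ_{d | n} d^r · (φ(n)/φ(n/d))^{k−1} = Π_{i=1}^{q} ( φ(p_i^{t_i})^{k−1} · p_i^{t_i r} − p_i^{t_i(k+r−1)} + σ_{k+r−1}(p_i^{t_i}) ), where the sum is over all positive divisors d of n and σ_m(x) = Σ_{e | x} e^m is the sum of m-th powers of the divisors of x. -/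
/-!
Writing the sum as `φ(n)^(k-1) · ∑_{de = n} d^r / φ(e)^(k-1)` exhibits it as a pointwise product
of multiplicative functions with a Dirichlet convolution of multiplicative functions, so it is
multiplicative and it suffices to evaluate it at a prime power `p^t`. There the divisor `d = p^i`
with `i < t` contributes `p^(i(k+r-1))`, since `φ(p^t) = p^i φ(p^(t-i))`, and these terms make up
`σ_{k+r-1}(p^t)` without its top term; the divisor `d = p^t` contributes `φ(p^t)^(k-1) p^(tr)`.
-/

open Finset

theorem Nat.totient_prime_pow_eq_pow_mul {p t i : ℕ} (hp : p.Prime) (hi : i < t) :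
    (p ^ t).totient = p ^ i * (p ^ (t - i)).totient := by
  rw [Nat.totient_prime_pow hp (by omega), Nat.totient_prime_pow hp (by omega : 0 < t - i),
    ← mul_assoc, ← pow_add]
  congr 2
  omega

namespace ArithmeticFunction

variable {R : Type*}

theorem ppow_apply_of_ne_zero [Semiring R] (f : ArithmeticFunction R) (m : ℕ) {x : ℕ}
    (hx : x ≠ 0) : f.ppow m x = f x ^ m := by
  rcases m.eq_zero_or_pos with rfl | hm
  · simp [hx]
  · exact ppow_apply hm

def totient : ArithmeticFunction ℕ := ⟨Nat.totient, Nat.totient_zero⟩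

@[simp]
theorem totient_apply (n : ℕ) : totient n = n.totient := rfl

theorem isMultiplicative_totient : totient.IsMultiplicative :=
  ⟨Nat.totient_one, Nat.totient_mul⟩

section Field

variable [Field R]

def divisorRatioSum (f g : ArithmeticFunction R) : ArithmeticFunction R :=
  g.pmul (f * (zeta : ArithmeticFunction R).pdiv g)

theorem divisorRatioSum_apply (f g : ArithmeticFunction R) (n : ℕ) :
    divisorRatioSum f g n = ∑ d ∈ n.divisors, f d * (g n / g (n / d)) := by
  rw [divisorRatioSum, pmul_apply, mul_apply, Nat.sum_divisorsAntidiagonal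
    (fun d e => f d * (zeta : ArithmeticFunction R).pdiv g e), mul_sum]
  refine sum_congr rfl fun d hd => ?_
  have hnd : n / d ≠ 0 := (Nat.div_pos (Nat.divisor_le hd) (Nat.pos_of_mem_divisors hd)).ne'
  rw [pdiv_apply, natCoe_apply, zeta_apply_ne hnd]
  push_cast
  ring

theorem IsMultiplicative.divisorRatioSum {f g : ArithmeticFunction R} (hf : f.IsMultiplicative)
    (hg : g.IsMultiplicative) : (divisorRatioSum f g).IsMultiplicative :=
  hg.pmul (hf.mul (isMultiplicative_zeta.natCast.pdiv hg))

theorem divisorRatioSum_pow_ppow_totient_apply (r m n : ℕ) :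
    divisorRatioSum (pow r : ArithmeticFunction R) ((totient : ArithmeticFunction R).ppow m) n =
      ∑ d ∈ n.divisors, (d : R) ^ r * ((n.totient : R) / ((n / d).totient : R)) ^ m := by
  rw [divisorRatioSum_apply]
  refine sum_congr rfl fun d hd => ?_
  have hd0 : d ≠ 0 := (Nat.pos_of_mem_divisors hd).ne'
  have hn0 : n ≠ 0 := Nat.ne_zero_of_mem_divisors hd
  have hnd : n / d ≠ 0 := (Nat.div_pos (Nat.divisor_le hd) (Nat.pos_of_mem_divisors hd)).ne'
  rw [ppow_apply_of_ne_zero _ _ hn0, ppow_apply_of_ne_zero _ _ hnd, natCoe_apply, natCoe_apply,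
    natCoe_apply, pow_apply, if_neg (fun h => hd0 h.2), div_pow]
  simp

end Field

theorem sum_divisors_prime_pow_mul_totient_div_pow [Field R] [CharZero R] {p : ℕ} (hp : p.Prime)
    (r m t : ℕ) :
    ∑ d ∈ (p ^ t).divisors, (d : R) ^ r * (((p ^ t).totient : R) / ((p ^ t / d).totient : R)) ^ m
      = ((p ^ t).totient : R) ^ m * (p : R) ^ (t * r) - (p : R) ^ (t * (m + r))
        + (sigma (m + r) (p ^ t) : R) := by
  have hlower : ∀ i ∈ range t, ((p ^ i : ℕ) : R) ^ r *
      (((p ^ t).totient : R) / ((p ^ t / p ^ i).totient : R)) ^ m = (p : R) ^ (i * (m + r)) := by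
    intro i hi
    have hi : i < t := mem_range.1 hi
    have hφ : ((p ^ (t - i)).totient : R) ≠ 0 := by
      exact_mod_cast (Nat.totient_pos.2 (pow_pos hp.pos _)).ne'
    rw [Nat.pow_div hi.le hp.pos, Nat.totient_prime_pow_eq_pow_mul hp hi, Nat.cast_mul,
      mul_div_cancel_right₀ _ hφ]
    push_cast
    ring
  rw [Nat.sum_divisors_prime_pow hp, sum_range_succ, sum_congr rfl hlower,
    sigma_apply_prime_pow hp, sum_range_succ, Nat.div_self (pow_pos hp.pos t)]
  push_cast
  simp only [Nat.totient_one, Nat.cast_one, div_one]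
  ring

end ArithmeticFunction

open ArithmeticFunction in
theorem stmt_3_general (k r n : ℕ) (hk : 0 < k) (hn : 0 < n) :
    (∑ d ∈ n.divisors, (d : ℚ) ^ r * ((Nat.totient n : ℚ) / (Nat.totient (n / d) : ℚ)) ^ (k - 1))
      = ∏ p ∈ n.primeFactors,
          ((Nat.totient (p ^ (n.factorization p)) : ℚ) ^ (k - 1) * (p : ℚ) ^ (n.factorization p * r)
            - (p : ℚ) ^ (n.factorization p * (k + r - 1))
            + (ArithmeticFunction.sigma (k + r - 1) (p ^ n.factorization p) : ℚ)) := by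
  have hmult := (isMultiplicative_pow (k := r)).natCast.divisorRatioSum
    (isMultiplicative_totient.natCast.ppow (R := ℚ) (k := k - 1))
  rw [← divisorRatioSum_pow_ppow_totient_apply, hmult.multiplicative_factorization _ hn.ne',
    Finsupp.prod]
  refine prod_congr n.support_factorization fun p hp => ?_
  rw [divisorRatioSum_pow_ppow_totient_apply,
    sum_divisors_prime_pow_mul_totient_div_pow (Nat.prime_of_mem_primeFactors hp),
    show k - 1 + r = k + r - 1 by omega]

theorem stmt_3 (k r n : ℕ) (hk : 0 < k) (hr : 0 < r) (hn : 0 < n) :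
    (∑ d ∈ n.divisors, (d : ℚ) ^ r * ((Nat.totient n : ℚ) / (Nat.totient (n / d) : ℚ)) ^ (k - 1))
      = ∏ p ∈ n.primeFactors,
          ((Nat.totient (p ^ (n.factorization p)) : ℚ) ^ (k - 1) * (p : ℚ) ^ (n.factorization p * r)
            - (p : ℚ) ^ (n.factorization p * (k + r - 1))
            + (ArithmeticFunction.sigma (k + r - 1) (p ^ n.factorization p) : ℚ)) :=
  stmt_3_general k r n hk hn
end

section
/- Let k, r, n be positive integers and let a_1, ..., a_k be integers with gcd(a_i, n) = 1 for i = 1, ..., k. Then the sum of gcd(m_1 − a_1, m_2 − a_2, ..., m_k − a_k, b_1, ..., b_r, n), taken over all tuples with 1 ≤ m_i ≤ n satisfying gcd(m_i, n) = 1 for each i and all 1 ≤ b_j ≤ n for j = 1, ..., r, equals φ(n)^k · Σ_{d | n} d^r / φ(n/d)^{k−1}, where the sum on the right is over all positive divisors d of n. -/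
/-!
Expand `gcd(x, n) = ∑_{e ∣ gcd(x, n)} φ(e)` and swap the sums: the left side becomes
`∑_{e ∣ n} φ(e) · #{m : e ∣ mᵢ - aᵢ for all i} · #{b : e ∣ bⱼ for all j}`. The second count is
`(n/e)^r`. Reduction `(ZMod n)ˣ → (ZMod e)ˣ` is a surjective homomorphism and `aᵢ` is a unit
mod `e`, so the residue class of `aᵢ` mod `e` contains `φ(n)/φ(e)` units mod `n`, and the first
count is `(φ(n)/φ(e))^k`. Substituting `d = n/e` gives the right side.
-/

open Finset
open scoped Nat

lemma MonoidHom.card_fiber_mul_card_of_surjective {G H : Type*} [Group G] [Group H] [Fintype G]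
    [Fintype H] [DecidableEq H] (f : G →* H) (hf : Function.Surjective f) (y : H) :
    #{g | f g = y} * Fintype.card H = Fintype.card G := by
  have hfiber : ∀ z, #{g | f g = z} = #{g | f g = y} := fun z =>
    MonoidHom.card_fiber_eq_of_mem_range f (hf z) (hf y)
  calc #{g | f g = y} * Fintype.card H = ∑ z : H, #{g | f g = z} := by simp [hfiber, mul_comm]
    _ = Fintype.card G := (card_eq_sum_card_fiberwise (by simp)).symm

lemma card_filter_isUnit {M : Type*} [Monoid M] [Fintype M] [Fintype Mˣ]
    [DecidablePred (IsUnit : M → Prop)] (P : M → Prop) [DecidablePred P] :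
    #{x | IsUnit x ∧ P x} = #{u : Mˣ | P u} := by
  refine (card_bij (fun u _ => u.val) (fun u hu => ?_) (fun u _ v _ h => Units.ext h) ?_).symm
  · simpa using hu
  · intro x hx
    simp only [mem_filter, mem_univ, true_and] at hx
    exact ⟨hx.1.unit, by simpa using hx.2, rfl⟩

lemma ZMod.card_filter_Icc_natCast (n : ℕ) [NeZero n] (P : ZMod n → Prop) [DecidablePred P] :
    #{x ∈ Icc 1 n | P (x : ℕ)} = #{x : ZMod n | P x} := by
  have himage : (Icc 1 n).image (Nat.cast : ℕ → ZMod n) = univ := by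
    refine eq_univ_of_forall fun z => mem_image.2 ⟨(z - 1).val + 1, ?_, by simp⟩
    have := (z - 1).val_lt
    simp only [mem_Icc]
    omega
  have hinj : Set.InjOn (Nat.cast : ℕ → ZMod n) (Icc 1 n) := by
    rw [← card_image_iff]
    refine le_antisymm card_image_le ?_
    rw [himage, card_univ, ZMod.card, Nat.card_Icc, Nat.add_sub_cancel]
  rw [← himage, filter_image, card_image_of_injOn (hinj.mono (filter_subset _ _))]

lemma Nat.gcd_eq_sum_totient {n : ℕ} (hn : n ≠ 0) (c : ℕ) :
    c.gcd n = ∑ e ∈ n.divisors with e ∣ c, φ e := by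
  have hdiv : {e ∈ n.divisors | e ∣ c} = (c.gcd n).divisors := by
    rw [← divisors_filter_dvd_of_dvd hn (Nat.gcd_dvd_right c n)]
    exact filter_congr fun e he => by
      rw [Nat.dvd_gcd_iff, and_iff_left (Nat.dvd_of_mem_divisors he)]
  rw [hdiv, sum_totient]

lemma card_filter_coprime_dvd_sub_mul_totient {n e : ℕ} [NeZero n] (he : e ∣ n) {a : ℤ}
    (ha : IsUnit (a : ZMod e)) :
    #{x ∈ Icc 1 n | Nat.Coprime x n ∧ (e : ℤ) ∣ (x : ℤ) - a} * φ e = φ n := by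
  classical
  have : NeZero e := ⟨ne_zero_of_dvd_ne_zero (NeZero.ne n) he⟩
  have hcond : ∀ x : ℕ, (x.Coprime n ∧ (e : ℤ) ∣ x - a) ↔
      (IsUnit (x : ZMod n) ∧ ZMod.castHom he (ZMod e) x = a) := fun x => by
    rw [ZMod.isUnit_iff_coprime, map_natCast, ← ZMod.intCast_zmod_eq_zero_iff_dvd,
      Int.cast_sub, sub_eq_zero, Int.cast_natCast]
  rw [filter_congr fun x _ => hcond x,
    ZMod.card_filter_Icc_natCast n fun z => IsUnit z ∧ ZMod.castHom he (ZMod e) z = a,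
    card_filter_isUnit]
  have hfiber : ∀ u : (ZMod n)ˣ, ZMod.castHom he (ZMod e) u = a ↔ ZMod.unitsMap he u = ha.unit :=
    fun u => by rw [Units.ext_iff, ZMod.unitsMap_val, IsUnit.unit_spec, ZMod.castHom_apply]
  rw [filter_congr fun u _ => hfiber u, ← ZMod.card_units_eq_totient, ← ZMod.card_units_eq_totient,
    MonoidHom.card_fiber_mul_card_of_surjective _ (ZMod.unitsMap_surjective he)]

lemma Fintype.filter_piFinset_forall {ι α : Type*} [Fintype ι] [DecidableEq ι]
    (s : ι → Finset α) (p : ι → α → Prop) [∀ i, DecidablePred (p i)] :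
    {f ∈ piFinset s | ∀ i, p i (f i)} = piFinset fun i => {x ∈ s i | p i x} := by
  ext f
  simp only [mem_filter, Fintype.mem_piFinset, forall_and]

lemma sum_sum_gcd_gcd_eq_sum_divisors {α β : Type*} (s : Finset α) (t : Finset β)
    (f : α → ℕ) (g : β → ℕ) {n : ℕ} (hn : n ≠ 0) :
    ∑ x ∈ s, ∑ y ∈ t, (f x).gcd ((g y).gcd n)
      = ∑ e ∈ n.divisors, φ e * #{x ∈ s | e ∣ f x} * #{y ∈ t | e ∣ g y} := by
  calc _ = ∑ x ∈ s, ∑ y ∈ t, ∑ e ∈ n.divisors, if e ∣ f x ∧ e ∣ g y then φ e else 0 := by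
        refine sum_congr rfl fun x _ => sum_congr rfl fun y _ => ?_
        simp_rw [← Nat.gcd_assoc, Nat.gcd_eq_sum_totient hn, sum_filter, Nat.dvd_gcd_iff]
    _ = ∑ e ∈ n.divisors, ∑ x ∈ s, ∑ y ∈ t, if e ∣ f x ∧ e ∣ g y then φ e else 0 := by
        simp_rw [sum_comm (s := t), sum_comm (s := s)]
    _ = _ := by
        refine sum_congr rfl fun e _ => ?_
        simp_rw [ite_and, sum_ite_irrel, sum_ite, sum_const_zero, sum_const, smul_eq_mul]
        ring

lemma card_filter_dvd_gcd_piFinset_Icc {ι : Type*} [Fintype ι] [DecidableEq ι] (n e : ℕ) :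
    #{b ∈ Fintype.piFinset fun _ : ι => Icc 1 n | e ∣ univ.gcd b} = (n / e) ^ Fintype.card ι := by
  simp_rw [Finset.dvd_gcd_iff, mem_univ, true_implies]
  rw [Fintype.filter_piFinset_forall (fun _ => Icc 1 n) fun _ x => e ∣ x, Fintype.card_piFinset,
    prod_const, card_univ, ← Nat.Ioc_filter_dvd_card_eq_div,
    ← Icc_add_one_left_eq_Ioc, zero_add]

lemma card_filter_dvd_gcd_sub_piFinset_Icc {k : ℕ} (n e : ℕ) (a : Fin k → ℤ) :
    #{m ∈ {m ∈ Fintype.piFinset fun _ : Fin k => Icc 1 n | ∀ i, Nat.gcd (m i) n = 1} |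
        e ∣ univ.gcd fun i => ((m i : ℤ) - a i).natAbs}
      = ∏ i, #{x ∈ Icc 1 n | Nat.Coprime x n ∧ (e : ℤ) ∣ (x : ℤ) - a i} := by
  rw [← Fintype.card_piFinset, filter_filter]
  congr 1
  ext m
  simp only [mem_filter, Fintype.mem_piFinset, Finset.dvd_gcd_iff, mem_univ, true_implies,
    ← Int.natCast_dvd, forall_and]

theorem stmt_4_general (k r n : ℕ) (hk : 0 < k) (hn : 0 < n)
    (a : Fin k → ℤ) (ha : ∀ i, Int.gcd (a i) (n : ℤ) = 1) :
    (∑ m ∈ (Fintype.piFinset fun _ : Fin k => Finset.Icc 1 n).filter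
        (fun m => ∀ i, Nat.gcd (m i) n = 1),
      ∑ b ∈ Fintype.piFinset fun _ : Fin r => Finset.Icc 1 n,
        (Nat.gcd (Finset.univ.gcd fun i => ((m i : ℤ) - a i).natAbs)
          (Nat.gcd (Finset.univ.gcd fun j => b j) n) : ℚ))
    = (Nat.totient n : ℚ) ^ k *
        ∑ d ∈ n.divisors, (d : ℚ) ^ r / (Nat.totient (n / d) : ℚ) ^ (k - 1) := by
  have : NeZero n := ⟨hn.ne'⟩
  have htotient : ∀ e ∈ n.divisors, (φ e : ℚ) ≠ 0 := fun e he => by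
    exact_mod_cast (Nat.totient_pos.2 (Nat.pos_of_mem_divisors he)).ne'
  have hcount : ∀ e ∈ n.divisors, ∀ i,
      (#{x ∈ Icc 1 n | Nat.Coprime x n ∧ (e : ℤ) ∣ (x : ℤ) - a i} : ℚ) = φ n / φ e := by
    intro e he i
    have hen := Nat.dvd_of_mem_divisors he
    have hunit : IsUnit (a i : ZMod e) := (ZMod.coe_int_isUnit_iff_isCoprime _ _).2
      ((Int.isCoprime_iff_gcd_eq_one.2 (ha i)).of_isCoprime_of_dvd_right
        (Int.natCast_dvd_natCast.2 hen)).symm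
    rw [eq_div_iff (htotient e he)]
    exact_mod_cast card_filter_coprime_dvd_sub_mul_totient hen hunit
  rw [← Nat.sum_div_divisors n fun d => (d : ℚ) ^ r / (φ (n / d) : ℚ) ^ (k - 1), mul_sum]
  simp only [← Nat.cast_sum]
  rw [sum_sum_gcd_gcd_eq_sum_divisors _ _ _ _ hn.ne', Nat.cast_sum]
  refine sum_congr rfl fun e he => ?_
  simp only [card_filter_dvd_gcd_sub_piFinset_Icc, card_filter_dvd_gcd_piFinset_Icc,
    Nat.div_div_self (Nat.dvd_of_mem_divisors he) hn.ne']
  push_cast [hcount e he]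
  obtain ⟨k, rfl⟩ := Nat.exists_eq_add_one_of_ne_zero hk.ne'
  have hφe := htotient e he
  simp only [prod_const, card_univ, Fintype.card_fin, Nat.add_sub_cancel]
  rw [div_pow]
  field_simp
  ring

theorem stmt_4 (k r n : ℕ) (hk : 0 < k) (hr : 0 < r) (hn : 0 < n)
    (a : Fin k → ℤ) (ha : ∀ i, Int.gcd (a i) (n : ℤ) = 1) :
    (∑ m ∈ (Fintype.piFinset fun _ : Fin k => Finset.Icc 1 n).filter
        (fun m => ∀ i, Nat.gcd (m i) n = 1),
      ∑ b ∈ Fintype.piFinset fun _ : Fin r => Finset.Icc 1 n,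
        (Nat.gcd (Finset.univ.gcd fun i => ((m i : ℤ) - a i).natAbs)
          (Nat.gcd (Finset.univ.gcd fun j => b j) n) : ℚ))
    = (Nat.totient n : ℚ) ^ k *
        ∑ d ∈ n.divisors, (d : ℚ) ^ r / (Nat.totient (n / d) : ℚ) ^ (k - 1) :=
  stmt_4_general k r n hk hn a ha
end

section
/- Let n, s be positive integers. Then Σ (m − 1, n^s)_s = Φ_s(n^s) · τ_s(n^s), where the sum is over all integers m with 1 ≤ m ≤ n^s and (m, n^s)_s = 1. -/
/-- `τ_s(n)`: the number of positive integers `l` with `l ^ s ∣ n`. -/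
def tauS (s n : ℕ) : ℕ := ((Finset.Icc 1 n).filter (fun l => l ^ s ∣ n)).card

/-!
Write `N = n ^ s`. For every `m`, `(m, N)_s = G ^ s` where the divisors `l ∣ n` with
`l ^ s ∣ m` are exactly the divisors of `G`. Hence `(m - 1, N)_s = ∑_{l ∣ n, l ^ s ∣ m - 1} J_s(l)`
with Jordan's totient `J_s`, and the sum becomes
`∑_{l ∣ n} J_s(l) · #{m : (m, N)_s = 1, l ^ s ∣ m - 1}`. Detecting `(m, N)_s = 1` by
`∑_{k ∣ n, k ^ s ∣ m} μ(k)` and counting the remaining congruences by the Chinese remainder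
theorem, that count is `(N / l ^ s) ∏_{p ∣ n, p ∤ l} (1 - p⁻ˢ) = J_s(n) / J_s(l)`. So each of the
`τ(n) = τ_s(N)` divisors `l` contributes `J_s(n)`, and `J_s(n) = Φ_s(N)` is the case `l = 1`.
-/

open Finset ArithmeticFunction
open scoped ArithmeticFunction.Moebius ArithmeticFunction.zeta

theorem pow_dvd_iff_dvd_findGreatest {s k l : ℕ} (hs : s ≠ 0) (hk : k ≠ 0) :
    l ^ s ∣ k ↔ l ∣ Nat.findGreatest (fun l => l ^ s ∣ k) k := by
  set G := Nat.findGreatest (fun l => l ^ s ∣ k) k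
  have hG : G ^ s ∣ k :=
    Nat.findGreatest_spec (P := fun l => l ^ s ∣ k) (Nat.one_le_iff_ne_zero.2 hk) (by simp)
  refine ⟨fun hl => ?_, fun hl => (pow_dvd_pow_of_dvd hl s).trans hG⟩
  have hlcm : l.lcm G ^ s ∣ k := Nat.pow_lcm_pow ▸ Nat.lcm_dvd hl hG
  have hlcm_pos : 0 < l.lcm G := by
    refine Nat.pos_of_ne_zero fun h => hk ?_
    rwa [h, zero_pow hs, zero_dvd_iff] at hlcm
  have hle : l.lcm G ≤ G :=
    Nat.le_findGreatest
      ((Nat.le_self_pow hs _).trans (Nat.le_of_dvd (Nat.pos_of_ne_zero hk) hlcm)) hlcm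
  rw [← Nat.le_antisymm hle (Nat.le_of_dvd hlcm_pos (Nat.dvd_lcm_right l G))]
  exact Nat.dvd_lcm_left l G

theorem exists_sPowGcd_eq_and_filter_divisors_eq {n s : ℕ} (hn : n ≠ 0) (hs : s ≠ 0) (m : ℕ) :
    ∃ G, sPowGcd s (m.gcd (n ^ s)) = G ^ s ∧ {l ∈ n.divisors | l ^ s ∣ m} = G.divisors := by
  have hk : m.gcd (n ^ s) ≠ 0 := Nat.gcd_ne_zero_right (pow_ne_zero s hn)
  have hG : Nat.findGreatest (fun l => l ^ s ∣ m.gcd (n ^ s)) (m.gcd (n ^ s)) ≠ 0 :=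
    (Nat.findGreatest_pos.2 ⟨1, one_pos, Nat.one_le_iff_ne_zero.2 hk, by simp⟩).ne'
  refine ⟨_, rfl, ?_⟩
  ext l
  rw [mem_filter, Nat.mem_divisors, Nat.mem_divisors, ← pow_dvd_iff_dvd_findGreatest hs hk,
    Nat.dvd_gcd_iff, Nat.pow_dvd_pow_iff hs]
  tauto

theorem sum_divisors_moebius_eq_ite {R : Type*} [Ring R] (n : ℕ) :
    ∑ d ∈ n.divisors, (μ d : R) = if n = 1 then 1 else 0 := by
  have := coe_mul_zeta_apply (f := (μ : ArithmeticFunction R)) (x := n)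
  rw [coe_moebius_mul_coe_zeta, one_apply] at this
  simpa [intCoe_apply] using this.symm

theorem sum_moebius_filter_pow_dvd {n s : ℕ} (hn : n ≠ 0) (hs : s ≠ 0) (m : ℕ) :
    ∑ k ∈ n.divisors with k ^ s ∣ m, (μ k : ℚ) =
      if sPowGcd s (m.gcd (n ^ s)) = 1 then 1 else 0 := by
  obtain ⟨G, hG, hdiv⟩ := exists_sPowGcd_eq_and_filter_divisors_eq hn hs m
  simp only [hdiv, hG, pow_eq_one_iff_left hs, sum_divisors_moebius_eq_ite]

theorem sum_divisors_moebius_mul_eq_prod_primeFactors {R : Type*} [CommRing R]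
    {f : ArithmeticFunction R} (hf : f.IsMultiplicative) {n : ℕ} (hn : n ≠ 0) :
    ∑ d ∈ n.divisors, μ d * f d = ∏ p ∈ n.primeFactors, (1 - f p) := by
  have hF : ((μ : ArithmeticFunction R).pmul f * ζ).IsMultiplicative :=
    (isMultiplicative_moebius.intCast.pmul hf).mul isMultiplicative_zeta.natCast
  have key := (hF.eq_iff_eq_on_prime_powers _ _
    (IsMultiplicative.prodPrimeFactors fun p => 1 - f p)).2 fun p i hp => ?_
  · simpa only [coe_mul_zeta_apply, pmul_apply, intCoe_apply, prodPrimeFactors_apply hn]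
      using congr($key n)
  rw [coe_mul_zeta_apply, Nat.sum_divisors_prime_pow hp,
    prodPrimeFactors_apply (pow_ne_zero i hp.ne_zero)]
  rcases i with _ | i
  · simp [hf.map_one]
  rw [Nat.primeFactors_prime_pow i.succ_ne_zero hp, prod_singleton, sum_range_succ']
  simp [pmul_apply, moebius_apply_prime_pow hp, hf.map_one]
  ring

def invPowCoprime (s l : ℕ) : ArithmeticFunction ℚ :=
  ⟨fun k => if k ≠ 0 ∧ k.Coprime l then ((k : ℚ) ^ s)⁻¹ else 0, by simp⟩

theorem invPowCoprime_apply {s l k : ℕ} :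
    invPowCoprime s l k = if k ≠ 0 ∧ k.Coprime l then ((k : ℚ) ^ s)⁻¹ else 0 := rfl

theorem invPowCoprime_apply_prime {s l p : ℕ} (hp : p.Prime) :
    invPowCoprime s l p = if p ∣ l then 0 else ((p : ℚ) ^ s)⁻¹ := by
  by_cases h : p ∣ l <;> simp [invPowCoprime_apply, hp.coprime_iff_not_dvd, h, hp.ne_zero]

theorem isMultiplicative_invPowCoprime (s l : ℕ) : (invPowCoprime s l).IsMultiplicative := by
  refine IsMultiplicative.iff_ne_zero.2 ⟨by simp [invPowCoprime_apply], fun {a b} ha hb _ => ?_⟩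
  simp only [invPowCoprime_apply, Nat.coprime_mul_iff_left, ne_eq, mul_eq_zero, ha, hb]
  split_ifs <;> simp_all [mul_pow, mul_comm]

def jordanTotient (s n : ℕ) : ℚ := (n : ℚ) ^ s * ∏ p ∈ n.primeFactors, (1 - ((p : ℚ) ^ s)⁻¹)

theorem jordanTotient_eq_sum {s n : ℕ} (hn : n ≠ 0) :
    jordanTotient s n = ∑ d ∈ n.divisors, μ d * ((n / d : ℕ) : ℚ) ^ s := by
  have hprod : ∏ p ∈ n.primeFactors, (1 - ((p : ℚ) ^ s)⁻¹) =
      ∏ p ∈ n.primeFactors, (1 - invPowCoprime s 1 p) :=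
    prod_congr rfl fun p hp => by
      have hp := Nat.prime_of_mem_primeFactors hp
      rw [invPowCoprime_apply_prime hp, if_neg hp.not_dvd_one]
  rw [jordanTotient, hprod,
    ← sum_divisors_moebius_mul_eq_prod_primeFactors (isMultiplicative_invPowCoprime s 1) hn,
    mul_sum]
  refine sum_congr rfl fun d hd => ?_
  have hd0 : d ≠ 0 := Nat.ne_of_gt (Nat.pos_of_mem_divisors hd)
  rw [Nat.cast_div (Nat.dvd_of_mem_divisors hd) (by exact_mod_cast hd0), invPowCoprime_apply,
    if_pos ⟨hd0, Nat.coprime_one_right d⟩, div_pow, div_eq_mul_inv]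
  ring

theorem sum_divisors_jordanTotient {s : ℕ} (hs : s ≠ 0) (n : ℕ) :
    ∑ d ∈ n.divisors, jordanTotient s d = (n : ℚ) ^ s := by
  rcases n.eq_zero_or_pos with rfl | hn
  · simp [hs]
  refine (sum_eq_iff_sum_smul_moebius_eq (f := jordanTotient s)
    (g := fun n => (n : ℚ) ^ s)).2 (fun m hm => ?_) n hn
  rw [jordanTotient_eq_sum hm.ne', Nat.sum_divisorsAntidiagonal (fun a b => μ a • (b : ℚ) ^ s)]
  simp [zsmul_eq_mul]

theorem card_filter_range_dvd_and_dvd_add_one {a b N : ℕ} (ha : a ∣ N) (hb : b ∣ N) :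
    #{t ∈ range N | a ∣ t ∧ b ∣ t + 1} = if a.Coprime b then N / (a * b) else 0 := by
  split_ifs with hab
  · rcases eq_or_ne N 0 with rfl | hN
    · simp
    have habN : a * b ∣ N := hab.mul_dvd_of_dvd_of_dvd ha hb
    let c := Nat.chineseRemainder hab 0 (b - 1)
    have hc : c + 1 ≡ 0 [MOD b] := by
      have := c.2.2.add_right 1
      rw [Nat.sub_add_cancel (Nat.one_le_iff_ne_zero.2 (ne_zero_of_dvd_ne_zero hN hb))] at this
      exact this.trans (Nat.modEq_zero_iff_dvd.2 dvd_rfl)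
    have hiff : ∀ t, a ∣ t ∧ b ∣ t + 1 ↔ t ≡ c [MOD a * b] := by
      intro t
      rw [← Nat.modEq_and_modEq_iff_modEq_mul hab, ← Nat.modEq_zero_iff_dvd,
        ← Nat.modEq_zero_iff_dvd]
      exact and_congr ⟨fun h => h.trans c.2.1.symm, fun h => h.trans c.2.1⟩
        ⟨fun h => Nat.ModEq.add_right_cancel' 1 (h.trans hc.symm),
          fun h => (h.add_right 1).trans hc⟩
    rw [filter_congr fun t _ => hiff t, ← Nat.count_eq_card_filter_range,
      Nat.count_modEq_card _ (Nat.pos_of_dvd_of_pos habN (Nat.pos_of_ne_zero hN)),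
      Nat.mod_eq_zero_of_dvd habN]
    simp
  · refine card_eq_zero.2 (filter_eq_empty_iff.2 fun t _ ⟨hat, hbt⟩ => hab ?_)
    exact Nat.dvd_one.1 ((Nat.dvd_add_right ((Nat.gcd_dvd_left a b).trans hat)).1
      ((Nat.gcd_dvd_right a b).trans hbt))

theorem card_Icc_filter_dvd_sub_one_and_dvd {a b N : ℕ} (ha : a ∣ N) (hb : b ∣ N) :
    #{m ∈ Icc 1 N | a ∣ m - 1 ∧ b ∣ m} = if a.Coprime b then N / (a * b) else 0 := by
  rw [← card_filter_range_dvd_and_dvd_add_one ha hb]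
  refine card_nbij' (· - 1) (· + 1) ?_ ?_ ?_ ?_ <;> intro m <;> simp +contextual
  omega

theorem card_filter_dvd_sub_one_eq_prod {n s l : ℕ} (hn : n ≠ 0) (hs : s ≠ 0) (hl : l ∣ n) :
    (#{m ∈ {m ∈ Icc 1 (n ^ s) | sPowGcd s (m.gcd (n ^ s)) = 1} | l ^ s ∣ m - 1} : ℚ) =
      (n : ℚ) ^ s / l ^ s * ∏ p ∈ n.primeFactors, (1 - invPowCoprime s l p) := by
  calc (#{m ∈ {m ∈ Icc 1 (n ^ s) | sPowGcd s (m.gcd (n ^ s)) = 1} | l ^ s ∣ m - 1} : ℚ)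
      = ∑ m ∈ Icc 1 (n ^ s) with l ^ s ∣ m - 1, ∑ k ∈ n.divisors with k ^ s ∣ m, (μ k : ℚ) := by
        rw [filter_comm, natCast_card_filter]
        exact sum_congr rfl fun m _ => (sum_moebius_filter_pow_dvd hn hs m).symm
    _ = ∑ k ∈ n.divisors, (μ k : ℚ) * #{m ∈ Icc 1 (n ^ s) | l ^ s ∣ m - 1 ∧ k ^ s ∣ m} := by
        rw [sum_comm' (t' := n.divisors)
          (s' := fun k => {m ∈ Icc 1 (n ^ s) | l ^ s ∣ m - 1 ∧ k ^ s ∣ m})]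
        · simp [sum_const, mul_comm]
        · intro m k
          simp only [mem_filter]
          tauto
    _ = ∑ k ∈ n.divisors, (n : ℚ) ^ s / l ^ s * (μ k * invPowCoprime s l k) := by
        refine sum_congr rfl fun k hk => ?_
        have hkn := Nat.dvd_of_mem_divisors hk
        have hk0 : k ≠ 0 := ne_zero_of_dvd_ne_zero hn hkn
        have hl0 : l ≠ 0 := ne_zero_of_dvd_ne_zero hn hl
        rw [card_Icc_filter_dvd_sub_one_and_dvd (pow_dvd_pow_of_dvd hl s)
          (pow_dvd_pow_of_dvd hkn s), invPowCoprime_apply]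
        by_cases hkl : k.Coprime l
        · have hdvd : l ^ s * k ^ s ∣ n ^ s :=
            mul_pow l k s ▸ pow_dvd_pow_of_dvd (hkl.symm.mul_dvd_of_dvd_of_dvd hl hkn) s
          rw [if_pos (Nat.Coprime.pow s s hkl.symm), if_pos ⟨hk0, hkl⟩,
            Nat.cast_div hdvd (by positivity)]
          push_cast
          field_simp
        · have hlk : ¬ (l ^ s).Coprime (k ^ s) := by
            rwa [Nat.coprime_pow_left_iff (Nat.pos_of_ne_zero hs),
              Nat.coprime_pow_right_iff (Nat.pos_of_ne_zero hs), Nat.coprime_comm]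
          simp [hlk, hkl]
    _ = _ := by
        rw [← mul_sum,
          sum_divisors_moebius_mul_eq_prod_primeFactors (isMultiplicative_invPowCoprime s l) hn]

theorem prod_primeFactors_one_sub_invPowCoprime {n s l : ℕ} (hn : n ≠ 0) (hl : l ∣ n) :
    (∏ p ∈ l.primeFactors, (1 - ((p : ℚ) ^ s)⁻¹)) *
        ∏ p ∈ n.primeFactors, (1 - invPowCoprime s l p) =
      ∏ p ∈ n.primeFactors, (1 - ((p : ℚ) ^ s)⁻¹) := by
  have hfilter : {p ∈ n.primeFactors | p ∣ l} = l.primeFactors := by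
    ext p
    simp only [mem_filter, Nat.mem_primeFactors]
    exact ⟨fun ⟨⟨hp, _, _⟩, hpl⟩ => ⟨hp, hpl, ne_zero_of_dvd_ne_zero hn hl⟩,
      fun ⟨hp, hpl, _⟩ => ⟨⟨hp, hpl.trans hl, hn⟩, hpl⟩⟩
  have hcoprime : ∏ p ∈ n.primeFactors, (1 - invPowCoprime s l p) =
      ∏ p ∈ n.primeFactors with ¬p ∣ l, (1 - ((p : ℚ) ^ s)⁻¹) := by
    rw [prod_filter]
    refine prod_congr rfl fun p hp => ?_
    rw [invPowCoprime_apply_prime (Nat.prime_of_mem_primeFactors hp)]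
    split_ifs <;> simp
  rw [hcoprime, ← hfilter, prod_filter_mul_prod_filter_not]

theorem jordanTotient_mul_card_filter_dvd_sub_one {n s l : ℕ} (hn : n ≠ 0) (hs : s ≠ 0)
    (hl : l ∣ n) :
    jordanTotient s l *
        #{m ∈ {m ∈ Icc 1 (n ^ s) | sPowGcd s (m.gcd (n ^ s)) = 1} | l ^ s ∣ m - 1} =
      jordanTotient s n := by
  have hl0 : (l : ℚ) ^ s ≠ 0 := by
    have := ne_zero_of_dvd_ne_zero hn hl
    positivity
  rw [card_filter_dvd_sub_one_eq_prod hn hs hl, jordanTotient, jordanTotient,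
    ← prod_primeFactors_one_sub_invPowCoprime hn hl]
  field_simp

theorem klee_pow_eq_jordanTotient {n s : ℕ} (hn : n ≠ 0) (hs : s ≠ 0) :
    (klee s (n ^ s) : ℚ) = jordanTotient s n := by
  unfold klee
  simpa [jordanTotient] using jordanTotient_mul_card_filter_dvd_sub_one hn hs (one_dvd n)

theorem tauS_pow {n s : ℕ} (hn : n ≠ 0) (hs : s ≠ 0) : tauS s (n ^ s) = #n.divisors := by
  unfold tauS
  congr 1
  ext l
  simp only [mem_filter, mem_Icc, Nat.mem_divisors, Nat.pow_dvd_pow_iff hs]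
  refine ⟨fun ⟨_, hl⟩ => ⟨hl, hn⟩,
    fun ⟨hl, _⟩ => ⟨⟨Nat.pos_of_dvd_of_pos hl (Nat.pos_of_ne_zero hn), ?_⟩, hl⟩⟩
  exact (Nat.le_of_dvd (Nat.pos_of_ne_zero hn) hl).trans (Nat.le_self_pow hs n)

theorem stmt_6 (n s : ℕ) (hn : 0 < n) (hs : 0 < s) :
    ∑ m ∈ (Finset.Icc 1 (n ^ s)).filter (fun m => sPowGcd s (Nat.gcd m (n ^ s)) = 1),
      sPowGcd s (Nat.gcd (m - 1) (n ^ s))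
    = klee s (n ^ s) * tauS s (n ^ s) := by
  set A := (Icc 1 (n ^ s)).filter (fun m => sPowGcd s (m.gcd (n ^ s)) = 1)
  have hsPowGcd (m : ℕ) : (sPowGcd s ((m - 1).gcd (n ^ s)) : ℚ) =
      ∑ l ∈ n.divisors with l ^ s ∣ m - 1, jordanTotient s l := by
    obtain ⟨G, hG, hdiv⟩ := exists_sPowGcd_eq_and_filter_divisors_eq hn.ne' hs.ne' (m - 1)
    rw [hG, hdiv, sum_divisors_jordanTotient hs.ne', Nat.cast_pow]
  suffices (∑ m ∈ A, sPowGcd s ((m - 1).gcd (n ^ s)) : ℚ) = klee s (n ^ s) * tauS s (n ^ s) by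
    exact_mod_cast this
  calc (∑ m ∈ A, sPowGcd s ((m - 1).gcd (n ^ s)) : ℚ)
      = ∑ m ∈ A, ∑ l ∈ n.divisors with l ^ s ∣ m - 1, jordanTotient s l :=
        sum_congr rfl fun m _ => hsPowGcd m
    _ = ∑ l ∈ n.divisors, jordanTotient s l * #{m ∈ A | l ^ s ∣ m - 1} := by
        rw [sum_comm' (t' := n.divisors) (s' := fun l => {m ∈ A | l ^ s ∣ m - 1})]
        · simp [sum_const, mul_comm]
        · intro m l
          simp only [mem_filter]
          tauto
    _ = ∑ l ∈ n.divisors, jordanTotient s n := sum_congr rfl fun l hl =>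
        jordanTotient_mul_card_filter_dvd_sub_one hn.ne' hs.ne' (Nat.dvd_of_mem_divisors hl)
    _ = klee s (n ^ s) * tauS s (n ^ s) := by
        rw [sum_const, klee_pow_eq_jordanTotient hn.ne' hs.ne', tauS_pow hn.ne' hs.ne',
          nsmul_eq_mul, mul_comm]
end

section
/- For all positive integers n and s, Φ_s(n) = Σ_{d : d^s | n} μ(d) · n/d^s, where the sum is over all positive integers d with d^s dividing n and μ is the Möbius function. -/
open Finset ArithmeticFunction ArithmeticFunction.Moebius

theorem ArithmeticFunction.sum_divisors_moebius (n : ℕ) :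
    ∑ d ∈ n.divisors, (μ d : ℤ) = if n = 1 then 1 else 0 := by
  rw [← coe_mul_zeta_apply, moebius_mul_coe_zeta, one_apply]

def sPowGcdRoot (s k : ℕ) : ℕ := Nat.findGreatest (fun l => l ^ s ∣ k) k

section

variable {s k : ℕ}

theorem sPowGcd_eq_pow_sPowGcdRoot : sPowGcd s k = sPowGcdRoot s k ^ s := rfl

theorem pow_sPowGcdRoot_dvd (hk : 0 < k) : sPowGcdRoot s k ^ s ∣ k :=
  Nat.findGreatest_spec (P := fun l => l ^ s ∣ k) hk (by simp)

theorem le_sPowGcdRoot {l : ℕ} (hs : 0 < s) (hk : 0 < k) (hl : l ^ s ∣ k) :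
    l ≤ sPowGcdRoot s k :=
  Nat.le_findGreatest ((Nat.le_self_pow hs.ne' l).trans (Nat.le_of_dvd hk hl)) hl

theorem sPowGcdRoot_pos (hs : 0 < s) (hk : 0 < k) : 0 < sPowGcdRoot s k :=
  le_sPowGcdRoot hs hk (by simp)

theorem pow_dvd_iff_dvd_sPowGcdRoot {d : ℕ} (hs : 0 < s) (hk : 0 < k) :
    d ^ s ∣ k ↔ d ∣ sPowGcdRoot s k := by
  refine ⟨fun hd => ?_, fun hd => (pow_dvd_pow_of_dvd hd s).trans (pow_sPowGcdRoot_dvd hk)⟩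
  have hd_pos : 0 < d := Nat.pos_of_ne_zero <| by
    rintro rfl
    rw [zero_pow hs.ne', zero_dvd_iff] at hd
    omega
  have hlcm : Nat.lcm d (sPowGcdRoot s k) ^ s ∣ k := by
    rw [← Nat.pow_lcm_pow]
    exact Nat.lcm_dvd hd (pow_sPowGcdRoot_dvd hk)
  have hlcm_eq : Nat.lcm d (sPowGcdRoot s k) = sPowGcdRoot s k :=
    le_antisymm (le_sPowGcdRoot hs hk hlcm)
      (Nat.le_of_dvd (Nat.lcm_pos hd_pos (sPowGcdRoot_pos hs hk)) (Nat.dvd_lcm_right _ _))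
  exact hlcm_eq ▸ Nat.dvd_lcm_left _ _

theorem filter_pow_dvd_eq_divisors_sPowGcdRoot {N : ℕ} (hs : 0 < s) (hk : 0 < k) (hkN : k ≤ N) :
    (Icc 1 N).filter (fun d => d ^ s ∣ k) = (sPowGcdRoot s k).divisors := by
  have hroot_le : sPowGcdRoot s k ≤ N := Nat.findGreatest_le k |>.trans hkN
  have hroot_pos := sPowGcdRoot_pos hs hk
  ext d
  simp only [mem_filter, mem_Icc, Nat.mem_divisors, pow_dvd_iff_dvd_sPowGcdRoot hs hk]
  constructor
  · rintro ⟨-, hd⟩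
    exact ⟨hd, hroot_pos.ne'⟩
  · rintro ⟨hd, -⟩
    exact ⟨⟨Nat.pos_of_dvd_of_pos hd hroot_pos, (Nat.le_of_dvd hroot_pos hd).trans hroot_le⟩, hd⟩

theorem sum_moebius_pow_dvd {N : ℕ} (hs : 0 < s) (hk : 0 < k) (hkN : k ≤ N) :
    ∑ d ∈ (Icc 1 N).filter (fun d => d ^ s ∣ k), (μ d : ℤ) =
      if sPowGcd s k = 1 then 1 else 0 := by
  rw [filter_pow_dvd_eq_divisors_sPowGcdRoot hs hk hkN, sum_divisors_moebius,
    sPowGcd_eq_pow_sPowGcdRoot]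
  simp only [pow_eq_one_iff, hs.ne', or_false]

end

theorem card_filter_dvd_Icc (n q : ℕ) : #{m ∈ Icc 1 n | q ∣ m} = n / q := by
  rw [← Nat.Ioc_filter_dvd_card_eq_div]
  rfl

open ArithmeticFunction ArithmeticFunction.Moebius in
theorem stmt_7_general (n s : ℕ) (hs : 0 < s) :
    (klee s n : ℤ) =
      ∑ d ∈ (Finset.Icc 1 n).filter (fun d => d ^ s ∣ n), μ d * ((n / d ^ s : ℕ) : ℤ) := by
  calc (klee s n : ℤ)
      = ∑ m ∈ Icc 1 n, if sPowGcd s (Nat.gcd m n) = 1 then 1 else 0 := natCast_card_filter _ _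
    _ = ∑ m ∈ Icc 1 n, ∑ d ∈ (Icc 1 n).filter (fun d => d ^ s ∣ Nat.gcd m n), (μ d : ℤ) := by
      refine sum_congr rfl fun m hm => ?_
      have hm_pos : 0 < m := (mem_Icc.mp hm).1
      exact (sum_moebius_pow_dvd hs (Nat.gcd_pos_of_pos_left n hm_pos)
        ((Nat.gcd_le_left n hm_pos).trans (mem_Icc.mp hm).2)).symm
    _ = ∑ d ∈ (Icc 1 n).filter (fun d => d ^ s ∣ n),
          ∑ m ∈ (Icc 1 n).filter (fun m => d ^ s ∣ m), (μ d : ℤ) := by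
      refine sum_comm' fun m d => ?_
      simp only [mem_filter, Nat.dvd_gcd_iff]
      tauto
    _ = _ := by
      refine sum_congr rfl fun d _ => ?_
      rw [sum_const, card_filter_dvd_Icc, nsmul_eq_mul, mul_comm]

open ArithmeticFunction ArithmeticFunction.Moebius in
theorem stmt_7 (n s : ℕ) (hn : 0 < n) (hs : 0 < s) :
    (klee s n : ℤ) =
      ∑ d ∈ (Finset.Icc 1 n).filter (fun d => d ^ s ∣ n), μ d * ((n / d ^ s : ℕ) : ℤ) :=
  stmt_7_general n s hs
end

section
/- For all positive integers n and s, Σ_{d | n} Φ_s(d^s) = n^s, where the sum is over all positive divisors d of n. -/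
/-!
Sort the integers `1 ≤ m ≤ n ^ s` by the `s`-th root `d` of `(m, n ^ s)_s`; then `d ∣ n`.
Writing `n = d * e`, the fibre over `d` consists of the `m = d ^ s * m'` with `1 ≤ m' ≤ e ^ s`
and `(m', e ^ s)_s = 1`, since `(d ^ s * m', (d * e) ^ s)_s = d ^ s * (m', e ^ s)_s`. So the
fibre has `Φ_s(e ^ s)` elements, and summing over `d ∣ n` (equivalently over `e = n / d`) gives
`n ^ s`.
-/

open Finset

def sPowRoot (s k : ℕ) : ℕ := Nat.findGreatest (fun l => l ^ s ∣ k) k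

section sPowRoot

variable {s k : ℕ}

lemma sPowGcd_eq_one_iff_s17 (hs : s ≠ 0) : sPowGcd s k = 1 ↔ sPowRoot s k = 1 := by
  rw [sPowGcd, pow_eq_one_iff, or_iff_left hs]
  rfl

lemma pow_sPowRoot_dvd (hk : 0 < k) : sPowRoot s k ^ s ∣ k :=
  Nat.findGreatest_spec (P := fun l => l ^ s ∣ k) hk (by simp)

lemma le_sPowRoot (hs : s ≠ 0) (hk : 0 < k) {l : ℕ} (hl : l ^ s ∣ k) : l ≤ sPowRoot s k := by
  rcases l.eq_zero_or_pos with rfl | hl₀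
  · exact Nat.zero_le _
  · exact Nat.le_findGreatest ((Nat.le_self_pow hs l).trans (Nat.le_of_dvd hk hl)) hl

lemma sPowRoot_dvd_of_dvd_pow {n : ℕ} (hs : s ≠ 0) (hk : 0 < k) (hkn : k ∣ n ^ s) :
    sPowRoot s k ∣ n :=
  (Nat.pow_dvd_pow_iff hs).mp ((pow_sPowRoot_dvd hk).trans hkn)

/-- Strip the common factor `g = gcd l d`: the cofactor of `l` is coprime to that of `d`, so its
`s`-th power divides `k`. -/
lemma le_mul_sPowRoot_of_pow_dvd (hs : s ≠ 0) (hk : 0 < k) {d l : ℕ} (hd : 0 < d)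
    (hl : l ^ s ∣ d ^ s * k) : l ≤ d * sPowRoot s k := by
  obtain ⟨g, l', d', hg, hcop, rfl, rfl⟩ := Nat.exists_coprime' (Nat.gcd_pos_of_pos_right l hd)
  have hl' : l' ^ s ∣ d' ^ s * k := by
    rw [mul_pow, mul_pow, mul_right_comm] at hl
    exact Nat.dvd_of_mul_dvd_mul_right (pow_pos hg s) hl
  have hl'k : l' ≤ sPowRoot s k := le_sPowRoot hs hk ((hcop.pow s s).dvd_of_dvd_mul_left hl')
  have hgd : g ≤ d' * g := Nat.le_mul_of_pos_left g (Nat.pos_of_mul_pos_right hd)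
  calc l' * g ≤ sPowRoot s k * (d' * g) := Nat.mul_le_mul hl'k hgd
    _ = d' * g * sPowRoot s k := mul_comm _ _

lemma sPowRoot_pow_mul (hs : s ≠ 0) (hk : 0 < k) {d : ℕ} (hd : 0 < d) :
    sPowRoot s (d ^ s * k) = d * sPowRoot s k := by
  refine le_antisymm (le_mul_sPowRoot_of_pow_dvd hs hk hd (pow_sPowRoot_dvd (by positivity))) ?_
  refine le_sPowRoot hs (by positivity) ?_
  rw [mul_pow]
  exact mul_dvd_mul_left _ (pow_sPowRoot_dvd hk)

end sPowRoot

def sPowRootFibre (s n d : ℕ) : Finset ℕ := {m ∈ Icc 1 (n ^ s) | sPowRoot s (m.gcd (n ^ s)) = d}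

section sPowRootFibre

variable {s n d e : ℕ}

lemma sPowRoot_mem_divisors (hs : s ≠ 0) (hn : 0 < n) (m : ℕ) :
    sPowRoot s (m.gcd (n ^ s)) ∈ n.divisors :=
  Nat.mem_divisors.mpr ⟨sPowRoot_dvd_of_dvd_pow hs (Nat.gcd_pos_of_pos_right m (pow_pos hn s))
    (Nat.gcd_dvd_right m _), hn.ne'⟩

lemma pow_dvd_of_mem_sPowRootFibre (hn : 0 < n) {m : ℕ} (hm : m ∈ sPowRootFibre s n d) :
    d ^ s ∣ m := by
  obtain ⟨-, rfl⟩ := mem_filter.mp hm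
  exact (pow_sPowRoot_dvd (Nat.gcd_pos_of_pos_right m (pow_pos hn s))).trans (Nat.gcd_dvd_left _ _)

lemma pow_mul_mem_sPowRootFibre_iff (hs : s ≠ 0) (hd : 0 < d) (he : 0 < e) (q : ℕ) :
    d ^ s * q ∈ sPowRootFibre s (d * e) d ↔
      q ∈ {m ∈ Icc 1 (e ^ s) | sPowGcd s (m.gcd (e ^ s)) = 1} := by
  have hds : 0 < d ^ s := by positivity
  have hgcd : (d ^ s * q).gcd ((d * e) ^ s) = d ^ s * q.gcd (e ^ s) := by
    rw [mul_pow, Nat.gcd_mul_left]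
  rw [sPowRootFibre, mem_filter, mem_filter, hgcd,
    sPowRoot_pow_mul hs (Nat.gcd_pos_of_pos_right q (pow_pos he s)) hd,
    sPowGcd_eq_one_iff_s17 hs, Nat.mul_eq_left hd.ne']
  simp only [mem_Icc, mul_pow, Nat.mul_le_mul_left_iff hds, Nat.one_le_iff_ne_zero,
    mul_ne_zero_iff, hds.ne', ne_eq, not_false_eq_true, true_and]

lemma card_sPowRootFibre (hs : s ≠ 0) (hd : 0 < d) (he : 0 < e) :
    #(sPowRootFibre s (d * e) d) = klee s (e ^ s) := by
  have hds : 0 < d ^ s := by positivity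
  have hde : 0 < d * e := by positivity
  refine card_nbij' (· / d ^ s) (d ^ s * ·) ?_ ?_ ?_ ?_
  · intro m hm
    simp only [mem_coe] at hm ⊢
    obtain ⟨q, rfl⟩ := pow_dvd_of_mem_sPowRootFibre hde hm
    rw [Nat.mul_div_cancel_left q hds]
    exact (pow_mul_mem_sPowRootFibre_iff hs hd he q).mp hm
  · intro q hq
    exact (pow_mul_mem_sPowRootFibre_iff hs hd he q).mpr hq
  · intro m hm
    exact Nat.mul_div_cancel' (pow_dvd_of_mem_sPowRootFibre hde hm)
  · intro q _
    exact Nat.mul_div_cancel_left q hds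

end sPowRootFibre

theorem stmt_17 (n s : ℕ) (hn : 0 < n) (hs : 0 < s) :
    ∑ d ∈ n.divisors, klee s (d ^ s) = n ^ s := by
  calc ∑ d ∈ n.divisors, klee s (d ^ s)
      = ∑ d ∈ n.divisors, klee s ((n / d) ^ s) := (Nat.sum_div_divisors n _).symm
    _ = ∑ d ∈ n.divisors, #(sPowRootFibre s n d) := by
        refine sum_congr rfl fun d hd => ?_
        obtain ⟨hdn, -⟩ := Nat.mem_divisors.mp hd
        have hd₀ := Nat.pos_of_dvd_of_pos hdn hn
        rw [← card_sPowRootFibre hs.ne' hd₀ (Nat.div_pos (Nat.le_of_dvd hn hdn) hd₀),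
          Nat.mul_div_cancel' hdn]
    _ = #(Icc 1 (n ^ s)) :=
        (card_eq_sum_card_fiberwise fun m _ => sPowRoot_mem_divisors hs.ne' hn m).symm
    _ = n ^ s := by rw [Nat.card_Icc, Nat.add_sub_cancel]
end
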